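/- (Claim B.1 content.) Let 0 < γ ≤ 1 and let μ1, μ2 be probability distributions on the four action profiles {A,B}×{C,D}. If μ1({(B,D)}) > γ/8, then (1/2)·E_{μ1}[U1 in G1] + (1/2)·E_{μ2}[U1 in G2] < 8/γ − 1/2. Moreover, for any probability distributions ν1, ν2 on {A,B}×{C,D} whose first-coordinate marginal is the point mass on A (i.e., the row player always plays A), (1/2)·E_{ν1}[U1 in G1] + (1/2)·E_{ν2}[U1 in G2] ≥ 8/γ; hence the always-A payoff strictly exceeds any payoff attainable with μ1({(B,D)}) > γ/8. -/
import Mathlib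


/-!
Statement 9 (Claim B.1 content): if the correlated strategy profile `μ1` for game `G1`
puts mass more than `γ/8` on `(B,D)`, then player 1's average expected utility across
the uniform mixture of `G1` and `G2` is below `8/γ − 1/2`; whereas always playing `A`
guarantees at least `8/γ`, strictly more.

Row actions: `0 = A`, `1 = B`.  Column actions: `0 = C`, `1 = D`.
-/

/-- A probability distribution on a finite set. -/
def IsDist {S : Type*} [Fintype S] (μ : S → ℝ) : Prop :=
  (∀ s, 0 ≤ μ s) ∧ ∑ s, μ s = 1

/-- Player 1's utilities in game `G1`. -/
noncomputable def U1G1 (γ : ℝ) : Fin 2 → Fin 2 → ℝ := ![![16 / γ, 16 / γ], ![2, 0]]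

/-- Player 1's utilities in game `G2`. -/
noncomputable def U1G2 : Fin 2 → Fin 2 → ℝ := ![![1, 0], ![9 / 10, 1 / 10]]

/-- Expected utility of the payoff matrix `U` under the correlated strategy profile `μ`. -/
noncomputable def expU (μ : Fin 2 × Fin 2 → ℝ) (U : Fin 2 → Fin 2 → ℝ) : ℝ :=
  ∑ p, μ p * U p.1 p.2

theorem claim_B1 (γ : ℝ) (hγ0 : 0 < γ) (hγ1 : γ ≤ 1)
    (μ1 μ2 : Fin 2 × Fin 2 → ℝ) (hμ1 : IsDist μ1) (hμ2 : IsDist μ2)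
    (hBD : μ1 (1, 1) > γ / 8) :
    (1 / 2) * expU μ1 (U1G1 γ) + (1 / 2) * expU μ2 U1G2 < 8 / γ - 1 / 2 ∧
    ∀ ν1 ν2 : Fin 2 × Fin 2 → ℝ, IsDist ν1 → IsDist ν2 →
      (∑ b, ν1 (0, b)) = 1 → (∑ b, ν2 (0, b)) = 1 →
      (1 / 2) * expU ν1 (U1G1 γ) + (1 / 2) * expU ν2 U1G2 ≥ 8 / γ ∧
      (1 / 2) * expU ν1 (U1G1 γ) + (1 / 2) * expU ν2 U1G2 >
        (1 / 2) * expU μ1 (U1G1 γ) + (1 / 2) * expU μ2 U1G2 := by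
  obtain ⟨hμ1n, hμ1s⟩ := hμ1
  obtain ⟨hμ2n, hμ2s⟩ := hμ2
  simp only [expU, U1G1, U1G2, Fintype.sum_prod_type, Fin.sum_univ_two,
    Matrix.cons_val', Matrix.cons_val_zero, Matrix.cons_val_one, Matrix.head_cons,
    Matrix.empty_val', Matrix.cons_val_fin_one, Matrix.head_fin_const] at *
  have ht8 : (8 : ℝ) ≤ 8 / γ := by rw [le_div_iff₀ hγ0]; nlinarith
  have key : (1 / 2) * (μ1 (0, 0) * (16 / γ) + μ1 (0, 1) * (16 / γ) +
      (μ1 (1, 0) * 2 + μ1 (1, 1) * 0)) + (1 / 2) * (μ2 (0, 0) * 1 + μ2 (0, 1) * 0 +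
      (μ2 (1, 0) * (9 / 10) + μ2 (1, 1) * (1 / 10))) < 8 / γ - 1 / 2 := by
    have h00 := hμ1n (0, 0); have h01 := hμ1n (0, 1)
    have h10 := hμ1n (1, 0); have h11 := hμ1n (1, 1)
    have g00 := hμ2n (0, 0); have g01 := hμ2n (0, 1)
    have g10 := hμ2n (1, 0); have g11 := hμ2n (1, 1)
    have hd : μ1 (1, 1) * (8 / γ) > (γ / 8) * (8 / γ) :=
      mul_lt_mul_of_pos_right hBD (by positivity)
    have he : (γ / 8) * (8 / γ) = 1 := by field_simp
    have hc : μ1 (1, 0) * (8 / γ - 2) ≥ 0 :=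
      mul_nonneg h10 (by linarith)
    have hab : μ1 (0, 0) + μ1 (0, 1) = 1 - μ1 (1, 0) - μ1 (1, 1) := by linarith
    have key2 : μ1 (0, 0) * (16 / γ) + μ1 (0, 1) * (16 / γ) =
        2 * (8 / γ) - μ1 (1, 0) * (8 / γ) * 2 - μ1 (1, 1) * (8 / γ) * 2 := by
      linear_combination (16 / γ) * hab
    linarith
  refine ⟨key, fun ν1 ν2 hν1 hν2 hr1 hr2 => ?_⟩
  obtain ⟨hν1n, hν1s⟩ := hν1
  obtain ⟨hν2n, hν2s⟩ := hν2
  simp only [Fintype.sum_prod_type, Fin.sum_univ_two] at hν1s hν2s hr1 hr2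
  have z10 : ν1 (1, 0) = 0 := by
    have := hν1n (1, 0); have := hν1n (1, 1); linarith
  have z11 : ν1 (1, 1) = 0 := by
    have := hν1n (1, 0); have := hν1n (1, 1); linarith
  have hge : (1 / 2) * (ν1 (0, 0) * (16 / γ) + ν1 (0, 1) * (16 / γ) +
      (ν1 (1, 0) * 2 + ν1 (1, 1) * 0)) + (1 / 2) * (ν2 (0, 0) * 1 + ν2 (0, 1) * 0 +
      (ν2 (1, 0) * (9 / 10) + ν2 (1, 1) * (1 / 10))) ≥ 8 / γ := by
    rw [z10, z11]
    have hsum16 : ν1 (0, 0) * (16 / γ) + ν1 (0, 1) * (16 / γ) = 2 * (8 / γ) := by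
      linear_combination (16 / γ) * hr1
    have g00 := hν2n (0, 0); have g10 := hν2n (1, 0); have g11 := hν2n (1, 1)
    linarith
  exact ⟨hge, by linarith⟩
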